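/- Let A be a complete Heyting algebra and A′ ⊆ A a subalgebra containing 1, closed under ∧, ∨ and the Heyting implication of A, which is closed under all suprema and infima as computed in A. Then V^{A′} ⊆ V^A, and for every restricted negation-free sentence ψ(x₁,…,xₙ) with all name parameters x₁,…,xₙ in V^{A′}, the truth value of ψ computed in V^{A′} equals its truth value computed in V^A: ‖ψ(x₁,…,xₙ)‖^{A′} = ‖ψ(x₁,…,xₙ)‖^{A}. -/

import Mathlib

universe u


/-- The universe `V^A` of `A`-names over a complete Heyting algebra `A`:
an `A`-name is a function from a set (of previously constructed `A`-names)
into `A`, here encoded by an indexing type `ι`, a family `elts` of names and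
the family `val` of their attached truth values. -/
inductive HName (A : Type u) : Type (u + 1) where
  | mk (ι : Type u) (elts : ι → HName A) (val : ι → A)

namespace HName

variable {A : Type u}

/-- The indexing type of (the domain of) a name. -/
def ι : HName A → Type u
  | mk ι _ _ => ι

/-- The members of (the domain of) a name. -/
def elts : (u : HName A) → u.ι → HName A
  | mk _ e _ => e

/-- The values attached by a name to the members of its domain. -/
def val : (u : HName A) → u.ι → A
  | mk _ _ v => v

/-- Ordinal rank of a name (used for the recursive definition of truth values). -/
noncomputable def rank : HName A → Ordinal.{u}
  | mk _ e _ => Ordinal.lsub fun i => (e i).rank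

theorem rank_lt {ι : Type u} (e : ι → HName A) (v : ι → A) (i : ι) :
    (e i).rank < (mk ι e v).rank := Ordinal.lt_lsub _ i

variable [Order.Frame A]

/-- The truth value `‖u ≈ v‖` of equality of two names, defined by the recursion
`‖u ≈ v‖ = ⨅_{x ∈ dom u} (u(x) ⇨ ‖x ∈ v‖) ⊓ ⨅_{y ∈ dom v} (v(y) ⇨ ‖y ∈ u‖)`,
where `‖x ∈ v‖ = ⨆_{y ∈ dom v} (v(y) ⊓ ‖y ≈ x‖)` is inlined. -/
noncomputable def eqVal : HName A → HName A → A
  | mk ι e a, mk κ f b =>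
      (⨅ i, a i ⇨ ⨆ j, b j ⊓ eqVal (f j) (e i)) ⊓
      (⨅ j, b j ⇨ ⨆ i, a i ⊓ eqVal (e i) (f j))
termination_by u v => max u.rank v.rank
decreasing_by
  · exact max_lt (lt_max_of_lt_right (rank_lt f b j)) (lt_max_of_lt_left (rank_lt e a i))
  · exact max_lt (lt_max_of_lt_left (rank_lt e a i)) (lt_max_of_lt_right (rank_lt f b j))

/-- The truth value `‖u ∈ v‖ = ⨆_{x ∈ dom v} (v(x) ⊓ ‖x ≈ u‖)` of membership. -/
noncomputable def memVal (u v : HName A) : A :=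
  ⨆ j : v.ι, v.val j ⊓ eqVal (v.elts j) u

end HName


/-- Formulas of the pure first-order language of set theory (binary predicates
`∈` and `≈`, connectives `∧`, `∨`, `→`, quantifiers `∃`, `∀`; negation-free),
with free variables among `n` de Bruijn indices; quantifiers bind the last
variable of the context. -/
inductive SFml : Nat → Type where
  | mem {n} (i j : Fin n) : SFml n
  | eq {n} (i j : Fin n) : SFml n
  | and {n} (phi psi : SFml n) : SFml n
  | or {n} (phi psi : SFml n) : SFml n
  | imp {n} (phi psi : SFml n) : SFml n
  | ex {n} (phi : SFml (n + 1)) : SFml n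
  | all {n} (phi : SFml (n + 1)) : SFml n

/-- The compositional truth value of a negation-free formula in the name
universe, with the quantifiers ranging over the names satisfying `D` (taking
`D := fun _ => True` gives the interpretation in all of `V^A`). -/
noncomputable def SFml.valIn (A : Type u) [Order.Frame A] (D : HName A → Prop) :
    {n : Nat} → SFml n → (Fin n → HName A) → A
  | _, .mem i j, rho => HName.memVal (rho i) (rho j)
  | _, .eq i j, rho => HName.eqVal (rho i) (rho j)
  | _, .and phi psi, rho => valIn A D phi rho ⊓ valIn A D psi rho
  | _, .or phi psi, rho => valIn A D phi rho ⊔ valIn A D psi rho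
  | _, .imp phi psi, rho => valIn A D phi rho ⇨ valIn A D psi rho
  | _, .ex phi, rho => ⨆ v : {v : HName A // D v}, valIn A D phi (Fin.snoc rho v.1)
  | _, .all phi, rho => ⨅ v : {v : HName A // D v}, valIn A D phi (Fin.snoc rho v.1)

/-- A formula is restricted if all its quantifiers are bounded, i.e. of the
form `∃y(y∈x ∧ …)` or `∀y(y∈x → …)`. -/
inductive SFml.Restricted : {n : Nat} → SFml n → Prop where
  | mem {n} (i j : Fin n) : Restricted (.mem i j)
  | eq {n} (i j : Fin n) : Restricted (.eq i j)
  | and {n} {phi psi : SFml n} :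
      Restricted phi → Restricted psi → Restricted (.and phi psi)
  | or {n} {phi psi : SFml n} :
      Restricted phi → Restricted psi → Restricted (.or phi psi)
  | imp {n} {phi psi : SFml n} :
      Restricted phi → Restricted psi → Restricted (.imp phi psi)
  | bex {n} (i : Fin n) {phi : SFml (n + 1)} : Restricted phi →
      Restricted (.ex (.and (.mem (Fin.last n) (Fin.castSucc i)) phi))
  | ball {n} (i : Fin n) {phi : SFml (n + 1)} : Restricted phi →
      Restricted (.all (.imp (.mem (Fin.last n) (Fin.castSucc i)) phi))

/-- The class of names all of whose truth values (hereditarily) lie in the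
subalgebra `A'`; this class represents `V^{A'}` inside `V^A`. -/
def HName.InSub {A : Type u} (A' : Set A) : HName A → Prop
  | .mk _ e v => (∀ i, v i ∈ A') ∧ ∀ i, HName.InSub A' (e i)

/-- `A'` is a subalgebra of the complete Heyting algebra `A` containing `1`,
closed under `∧`, `∨` and the Heyting implication of `A`, and closed under all
suprema and infima as computed in `A`. -/
structure IsCompleteSub (A : Type u) [Order.Frame A] (A' : Set A) : Prop where
  top_mem : ⊤ ∈ A'
  inf_mem : ∀ a ∈ A', ∀ b ∈ A', a ⊓ b ∈ A'
  sup_mem : ∀ a ∈ A', ∀ b ∈ A', a ⊔ b ∈ A'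
  himp_mem : ∀ a ∈ A', ∀ b ∈ A', a ⇨ b ∈ A'
  sSup_mem : ∀ S : Set A, S ⊆ A' → sSup S ∈ A'
  sInf_mem : ∀ S : Set A, S ⊆ A' → sInf S ∈ A'

/-!
Truth values respect `≈`: `‖·≈·‖` is reflexive, symmetric and transitive (by induction on ranks)
and `‖·∈·‖`, `‖·≈·‖`, hence all formulas, are congruent for it. Consequently a bounded
quantifier over any class of names containing `dom x` collapses to the domain of its bound,
`‖∃y∈x φ(y)‖ = ⨆_{y ∈ dom x} x(y) ⊓ ‖φ(y)‖` and `‖∀y∈x φ(y)‖ = ⨅_{y ∈ dom x} (x(y) ⇨ ‖φ(y)‖)`.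
Names in `V^{A'}` have their domain in `V^{A'}`, so induction on restricted formulas shows that
quantifying over `V^{A'}` or over `V^A` gives the same value.
-/

namespace HName

variable {A : Type u}

theorem rank_elts_lt : ∀ (u : HName A) (i : u.ι), (u.elts i).rank < u.rank
  | mk _ e v, i => rank_lt e v i

theorem InSub.elts {A' : Set A} : ∀ {u : HName A}, u.InSub A' → ∀ i, (u.elts i).InSub A'
  | mk _ _ _, h, i => h.2 i

variable [Order.Frame A]

theorem eqVal_def (u v : HName A) :
    eqVal u v = (⨅ i, u.val i ⇨ memVal (u.elts i) v) ⊓ (⨅ j, v.val j ⇨ memVal (v.elts j) u) := by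
  cases u; cases v; rw [eqVal]; rfl

theorem eqVal_comm (u v : HName A) : eqVal u v = eqVal v u := by
  rw [eqVal_def, eqVal_def, inf_comm]

theorem eqVal_inf_val_le_memVal (u v : HName A) (i : u.ι) :
    eqVal u v ⊓ u.val i ≤ memVal (u.elts i) v := by
  refine le_trans (inf_le_inf_right _ ?_) himp_inf_le
  rw [eqVal_def]
  exact inf_le_left.trans (iInf_le _ i)

theorem eqVal_self : ∀ u : HName A, eqVal u u = ⊤
  | mk ι e a => by
    have hval : ∀ i, a i ≤ memVal (e i) (mk ι e a) := fun i =>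
      le_iSup_of_le i (by rw [elts, eqVal_self (e i), inf_top_eq]; rfl)
    simp only [eqVal_def, inf_idem, iInf_eq_top, himp_eq_top_iff]
    exact hval

theorem val_le_memVal (u : HName A) (i : u.ι) : u.val i ≤ memVal (u.elts i) u := by
  simpa [eqVal_self] using eqVal_inf_val_le_memVal u u i

/-- The inductive step of `eqVal_trans`. -/
theorem eqVal_inf_memVal_le_of_trans (x v w : HName A)
    (htrans : ∀ j k, eqVal (w.elts k) (v.elts j) ⊓ eqVal (v.elts j) x ≤ eqVal (w.elts k) x) :
    eqVal v w ⊓ memVal x v ≤ memVal x w := by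
  rw [memVal, inf_iSup_eq]
  refine iSup_le fun j => ?_
  calc eqVal v w ⊓ (v.val j ⊓ eqVal (v.elts j) x)
      = (eqVal v w ⊓ v.val j) ⊓ eqVal (v.elts j) x := (inf_assoc ..).symm
    _ ≤ memVal (v.elts j) w ⊓ eqVal (v.elts j) x := inf_le_inf_right _ (eqVal_inf_val_le_memVal ..)
    _ ≤ memVal x w := by
      rw [memVal, iSup_inf_eq]
      exact iSup_mono fun k => (inf_assoc ..).le.trans (inf_le_inf_left _ (htrans j k))

theorem eqVal_trans (u v w : HName A) : eqVal u v ⊓ eqVal v w ≤ eqVal u w := by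
  have htrans : ∀ i j k, eqVal (u.elts i) (v.elts j) ⊓ eqVal (v.elts j) (w.elts k) ≤
      eqVal (u.elts i) (w.elts k) := fun i j k => eqVal_trans _ _ _
  rw [eqVal_def u w]
  refine le_inf (le_iInf fun i => le_himp_iff.2 ?_) (le_iInf fun k => le_himp_iff.2 ?_)
  · calc eqVal u v ⊓ eqVal v w ⊓ u.val i ≤ eqVal v w ⊓ memVal (u.elts i) v :=
          le_inf (inf_le_left.trans inf_le_right)
            ((inf_le_inf_right _ inf_le_left).trans (eqVal_inf_val_le_memVal ..))
      _ ≤ memVal (u.elts i) w := eqVal_inf_memVal_le_of_trans _ _ _ fun j k => by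
          rw [eqVal_comm (w.elts k), eqVal_comm _ (u.elts i), eqVal_comm (w.elts k), inf_comm]
          exact htrans i j k
  · calc eqVal u v ⊓ eqVal v w ⊓ w.val k ≤ eqVal v u ⊓ memVal (w.elts k) v := by
          rw [eqVal_comm v u, eqVal_comm v w]
          exact le_inf (inf_le_left.trans inf_le_left)
            ((inf_le_inf_right _ inf_le_right).trans (eqVal_inf_val_le_memVal ..))
      _ ≤ memVal (w.elts k) u := eqVal_inf_memVal_le_of_trans _ _ _ fun i j => htrans j i k
termination_by max (max u.rank v.rank) w.rank
decreasing_by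
  exact max_lt (max_lt (lt_max_of_lt_left (lt_max_of_lt_left (rank_elts_lt u i)))
    (lt_max_of_lt_left (lt_max_of_lt_right (rank_elts_lt v j))))
    (lt_max_of_lt_right (rank_elts_lt w k))

theorem memVal_congr_left (u u' v : HName A) : eqVal u u' ⊓ memVal u v ≤ memVal u' v := by
  rw [memVal, inf_iSup_eq]
  refine iSup_mono fun k => ?_
  calc eqVal u u' ⊓ (v.val k ⊓ eqVal (v.elts k) u)
      = v.val k ⊓ (eqVal (v.elts k) u ⊓ eqVal u u') := by rw [inf_comm (eqVal u u'), inf_assoc]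
    _ ≤ v.val k ⊓ eqVal (v.elts k) u' := inf_le_inf_left _ (eqVal_trans ..)

theorem memVal_congr_right (u v v' : HName A) : eqVal v v' ⊓ memVal u v ≤ memVal u v' :=
  eqVal_inf_memVal_le_of_trans u v v' fun _ _ => eqVal_trans ..

theorem memVal_congr (u u' v v' : HName A) :
    eqVal u u' ⊓ eqVal v v' ⊓ memVal u v ≤ memVal u' v' :=
  calc eqVal u u' ⊓ eqVal v v' ⊓ memVal u v = eqVal u u' ⊓ (eqVal v v' ⊓ memVal u v) :=
        inf_assoc ..
    _ ≤ eqVal u u' ⊓ memVal u v' := inf_le_inf_left _ (memVal_congr_right ..)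
    _ ≤ memVal u' v' := memVal_congr_left ..

theorem eqVal_congr (u u' v v' : HName A) :
    eqVal u u' ⊓ eqVal v v' ⊓ eqVal u v ≤ eqVal u' v' :=
  calc eqVal u u' ⊓ eqVal v v' ⊓ eqVal u v = eqVal u' u ⊓ eqVal u v ⊓ eqVal v v' := by
        rw [eqVal_comm u u', inf_right_comm]
    _ ≤ eqVal u' v ⊓ eqVal v v' := inf_le_inf_right _ (eqVal_trans ..)
    _ ≤ eqVal u' v' := eqVal_trans ..

theorem iSup_memVal_inf_eq {D : HName A → Prop} {F : HName A → A}
    (hF : ∀ v w, eqVal v w ⊓ F v ≤ F w) (u : HName A) (hD : ∀ i, D (u.elts i)) :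
    ⨆ v : {v // D v}, memVal v.1 u ⊓ F v.1 = ⨆ i, u.val i ⊓ F (u.elts i) := by
  refine le_antisymm (iSup_le fun v => ?_) (iSup_le fun i => ?_)
  · rw [memVal, iSup_inf_eq]
    refine iSup_mono fun i => ?_
    rw [inf_assoc, eqVal_comm]
    exact inf_le_inf_left _ (hF ..)
  · exact le_iSup_of_le ⟨u.elts i, hD i⟩ (inf_le_inf_right _ (val_le_memVal u i))

theorem iInf_memVal_himp_eq {D : HName A → Prop} {F : HName A → A}
    (hF : ∀ v w, eqVal v w ⊓ F v ≤ F w) (u : HName A) (hD : ∀ i, D (u.elts i)) :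
    ⨅ v : {v // D v}, (memVal v.1 u ⇨ F v.1) = ⨅ i, (u.val i ⇨ F (u.elts i)) := by
  refine le_antisymm (le_iInf fun i => ?_) (le_iInf fun v => le_himp_iff.2 ?_)
  · exact iInf_le_of_le ⟨u.elts i, hD i⟩ (himp_le_himp_right (val_le_memVal u i))
  · rw [memVal, inf_iSup_eq]
    refine iSup_le fun i => ?_
    calc (⨅ i, (u.val i ⇨ F (u.elts i))) ⊓ (u.val i ⊓ eqVal (u.elts i) v.1)
        ≤ (u.val i ⇨ F (u.elts i)) ⊓ u.val i ⊓ eqVal (u.elts i) v.1 := by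
          rw [← inf_assoc]; exact inf_le_inf_right _ (inf_le_inf_right _ (iInf_le _ i))
      _ ≤ F v.1 := by rw [inf_comm]; exact (inf_le_inf_left _ himp_inf_le).trans (hF ..)

end HName

theorem himp_congr_of_inf_le {α : Type*} [GeneralizedHeytingAlgebra α] {e p p' q q' : α}
    (hp : e ⊓ p' ≤ p) (hq : e ⊓ q ≤ q') : e ⊓ (p ⇨ q) ≤ p' ⇨ q' := by
  rw [le_himp_iff]
  calc e ⊓ (p ⇨ q) ⊓ p' ≤ e ⊓ ((p ⇨ q) ⊓ p) :=
        le_inf (inf_le_left.trans inf_le_left)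
          (le_inf (inf_le_left.trans inf_le_right) ((inf_le_inf_right p' inf_le_left).trans hp))
    _ ≤ e ⊓ q := inf_le_inf_left _ himp_inf_le
    _ ≤ q' := hq

namespace SFml

variable {A : Type u} [Order.Frame A]

theorem eqVal_inf_iInf_le_iInf_snoc {n : Nat} (rho rho' : Fin n → HName A) (v w : HName A) :
    HName.eqVal v w ⊓ ⨅ i, HName.eqVal (rho i) (rho' i) ≤
      ⨅ i, HName.eqVal ((Fin.snoc rho v : Fin (n + 1) → HName A) i)
        ((Fin.snoc rho' w : Fin (n + 1) → HName A) i) :=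
  le_iInf fun i => Fin.lastCases (by simp)
    (fun k => by simpa using inf_le_right.trans (iInf_le _ k)) i

theorem valIn_congr (D : HName A → Prop) :
    ∀ {n : Nat} (phi : SFml n) (rho rho' : Fin n → HName A),
      (⨅ i, HName.eqVal (rho i) (rho' i)) ⊓ valIn A D phi rho ≤ valIn A D phi rho'
  | _, .mem i j, rho, rho' =>
    (inf_le_inf_right _ (le_inf (iInf_le _ i) (iInf_le _ j))).trans (HName.memVal_congr ..)
  | _, .eq i j, rho, rho' =>
    (inf_le_inf_right _ (le_inf (iInf_le _ i) (iInf_le _ j))).trans (HName.eqVal_congr ..)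
  | _, .and phi psi, rho, rho' => le_inf
      ((inf_le_inf_left _ inf_le_left).trans (valIn_congr D phi rho rho'))
      ((inf_le_inf_left _ inf_le_right).trans (valIn_congr D psi rho rho'))
  | _, .or phi psi, rho, rho' => by
    simp only [valIn, inf_sup_left]
    exact sup_le_sup (valIn_congr D phi rho rho') (valIn_congr D psi rho rho')
  | _, .imp phi psi, rho, rho' => by
    refine himp_congr_of_inf_le ?_ (valIn_congr D psi rho rho')
    simpa only [HName.eqVal_comm (rho _)] using valIn_congr D phi rho' rho
  | _, .ex phi, rho, rho' => by
    simp only [valIn, inf_iSup_eq]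
    refine iSup_mono fun v => (inf_le_inf_right _ ?_).trans (valIn_congr D phi _ _)
    simpa [HName.eqVal_self] using eqVal_inf_iInf_le_iInf_snoc rho rho' v.1 v.1
  | _, .all phi, rho, rho' => by
    simp only [valIn]
    refine le_iInf fun v => (inf_le_inf ?_ (iInf_le _ v)).trans (valIn_congr D phi _ _)
    simpa [HName.eqVal_self] using eqVal_inf_iInf_le_iInf_snoc rho rho' v.1 v.1

theorem valIn_snoc_congr (D : HName A → Prop) {n : Nat} (phi : SFml (n + 1))
    (rho : Fin n → HName A) (v w : HName A) :
    HName.eqVal v w ⊓ valIn A D phi (Fin.snoc rho v) ≤ valIn A D phi (Fin.snoc rho w) :=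
  (inf_le_inf_right _ (by simpa [HName.eqVal_self] using
    eqVal_inf_iInf_le_iInf_snoc rho rho v w)).trans (valIn_congr D phi _ _)

theorem valIn_bex {D : HName A → Prop} {n : Nat} (phi : SFml (n + 1)) (rho : Fin n → HName A)
    (i : Fin n) (hD : ∀ j, D ((rho i).elts j)) :
    valIn A D (.ex (.and (.mem (Fin.last n) (Fin.castSucc i)) phi)) rho =
      ⨆ j, (rho i).val j ⊓ valIn A D phi (Fin.snoc rho ((rho i).elts j)) := by
  simp only [valIn, Fin.snoc_last, Fin.snoc_castSucc]
  exact HName.iSup_memVal_inf_eq (valIn_snoc_congr D phi rho) (rho i) hD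

theorem valIn_ball {D : HName A → Prop} {n : Nat} (phi : SFml (n + 1)) (rho : Fin n → HName A)
    (i : Fin n) (hD : ∀ j, D ((rho i).elts j)) :
    valIn A D (.all (.imp (.mem (Fin.last n) (Fin.castSucc i)) phi)) rho =
      ⨅ j, ((rho i).val j ⇨ valIn A D phi (Fin.snoc rho ((rho i).elts j))) := by
  simp only [valIn, Fin.snoc_last, Fin.snoc_castSucc]
  exact HName.iInf_memVal_himp_eq (valIn_snoc_congr D phi rho) (rho i) hD

end SFml

theorem subalgebra_absoluteness_general {A : Type u} [Order.Frame A] (A' : Set A) :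
    {u : HName A | u.InSub A'} ⊆ (Set.univ : Set (HName A)) ∧
      ∀ {n : Nat} (psi : SFml n), psi.Restricted →
        ∀ rho : Fin n → HName A, (∀ i, (rho i).InSub A') →
          SFml.valIn A (HName.InSub A') psi rho =
            SFml.valIn A (fun _ => True) psi rho := by
  refine ⟨Set.subset_univ _, fun psi hpsi => ?_⟩
  have hsnoc : ∀ {m} {rho : Fin m → HName A}, (∀ i, (rho i).InSub A') →
      ∀ {v : HName A}, v.InSub A' → ∀ k, ((Fin.snoc rho v : Fin (m + 1) → HName A) k).InSub A' := by
    intro m rho hrho v hv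
    simp [Fin.forall_fin_succ', hrho, hv]
  induction hpsi with
  | mem | eq => intros; rfl
  | and _ _ ih₁ ih₂ | or _ _ ih₁ ih₂ | imp _ _ ih₁ ih₂ =>
    intro rho hrho
    simp only [SFml.valIn, ih₁ rho hrho, ih₂ rho hrho]
  | bex i _ ih =>
    intro rho hrho
    rw [SFml.valIn_bex _ _ _ (hrho i).elts, SFml.valIn_bex _ _ _ fun _ => trivial]
    exact iSup_congr fun j => by rw [ih _ (hsnoc hrho ((hrho i).elts j))]
  | ball i _ ih =>
    intro rho hrho
    rw [SFml.valIn_ball _ _ _ (hrho i).elts, SFml.valIn_ball _ _ _ fun _ => trivial]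
    exact iInf_congr fun j => by rw [ih _ (hsnoc hrho ((hrho i).elts j))]

/-- For a complete subalgebra `A' ⊆ A`, the name universe `V^{A'}` is contained
in `V^A`, and for every restricted negation-free sentence with name parameters
in `V^{A'}`, its truth value computed in `V^{A'}` coincides with its truth
value computed in `V^A`. -/
theorem subalgebra_absoluteness {A : Type u} [Order.Frame A] (A' : Set A)
    (h : IsCompleteSub A A') :
    {u : HName A | u.InSub A'} ⊆ (Set.univ : Set (HName A)) ∧
      ∀ {n : Nat} (psi : SFml n), psi.Restricted →
        ∀ rho : Fin n → HName A, (∀ i, (rho i).InSub A') →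
          SFml.valIn A (HName.InSub A') psi rho =
            SFml.valIn A (fun _ => True) psi rho :=
  subalgebra_absoluteness_general A'
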